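/- Let Δ > 0 and p > 0. Let (I_k)_{k≥1} be an IID sequence of {0,1}-valued random variables with P(I_1 = 1) = Δ/(Δ+p). Fix η ∈ (0,1), set η_k = (k+1)^{−η}, fix y_0 ∈ ℝ, and define y_{k+1} = y_k + η_k·[I_{k+1}(y_k + p) − y_k] for k ≥ 0. Then E|y_k − Δ| = O(k^{−η/2}); i.e., there exists C > 0 such that E|y_k − Δ| ≤ C·k^{−η/2} for all k ≥ 1. -/

import Mathlib

/-!
The error `e_k = y_k - Δ` obeys `e_{k+1} = (1 - a η_k) e_k + η_k (y_k + p) (I_{k+1} - μ)`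
with `μ = Δ / (Δ + p)` and `a = 1 - μ`, and the noise `I_{k+1} - μ` is centred and independent
of `y_k`. Hence the cross term vanishes in expectation and `m_k = E e_k²` satisfies
`m_{k+1} ≤ (1 - a η_k) m_k + D η_k²` for large `k`. Since `η_k - η_{k+1} = o(η_k²)`
(this is where `η < 1` enters), induction gives Chung's bound `m_k = O(k^{-η})`, and
`E|e_k| ≤ √m_k` finishes the proof.
-/

open MeasureTheory ProbabilityTheory Filter Topology Asymptotics

theorem tendsto_natCast_add_one_rpow_neg_atTop {η : ℝ} (hη : 0 < η) :
    Tendsto (fun k : ℕ => ((k : ℝ) + 1) ^ (-η)) atTop (𝓝 0) :=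
  (tendsto_rpow_neg_atTop hη).comp
    (tendsto_atTop_add_const_right _ 1 tendsto_natCast_atTop_atTop)

theorem rpow_neg_le_add_one_rpow_neg_mul {η x : ℝ} (hη0 : 0 ≤ η) (hη1 : η ≤ 1) (hx : 0 < x) :
    x ^ (-η) ≤ (x + 1) ^ (-η) * (1 + η / x) := by
  have hratio : x ^ (-η) = (1 + 1 / x) ^ η * (x + 1) ^ (-η) := by
    rw [show 1 + 1 / x = (x + 1) / x by field_simp, Real.div_rpow (by positivity) hx.le,
      Real.rpow_neg hx.le, Real.rpow_neg (by positivity)]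
    field_simp
  have hbernoulli : (1 + 1 / x) ^ η ≤ 1 + η * (1 / x) :=
    rpow_one_add_le_one_add_mul_self (by linarith [one_div_pos.2 hx]) hη0 hη1
  rw [hratio, mul_comm, ← mul_one_div η x]
  gcongr

theorem isBigO_rpow_neg_of_eventually_le {a D η : ℝ} (ha : 0 < a) (hη0 : 0 < η) (hη1 : η < 1)
    {m : ℕ → ℝ} (hm : ∀ k, 0 ≤ m k)
    (hrec : ∀ᶠ k : ℕ in atTop,
      m (k + 1) ≤ (1 - a * ((k : ℝ) + 1) ^ (-η)) * m k + D * (((k : ℝ) + 1) ^ (-η)) ^ 2) :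
    m =O[atTop] fun k => (k : ℝ) ^ (-η) := by
  have hdrift : Tendsto (fun k : ℕ => η * (k : ℝ) ^ (η - 1)) atTop (𝓝 0) := by
    have h := ((tendsto_rpow_neg_atTop (sub_pos.2 hη1)).comp
      tendsto_natCast_atTop_atTop).const_mul η
    simpa [Function.comp_def] using h
  obtain ⟨K, hK⟩ := eventually_atTop.1 <| hrec.and <|
    ((tendsto_natCast_add_one_rpow_neg_atTop hη0).eventually
      (eventually_le_nhds (one_div_pos.2 ha))).and <|
    (hdrift.eventually (eventually_le_nhds (half_pos ha))).and (eventually_ge_atTop 1)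
  -- `C ≥ 2D/a` lets the drift `a v` absorb the noise `D v²`; `C ≥ m_K K^η` starts the induction.
  set C := max (2 * D / a) (m K * (K : ℝ) ^ η)
  have hC0 : 0 ≤ C := le_max_of_le_right (mul_nonneg (hm K) (by positivity))
  have hDC : D ≤ a / 2 * C := by
    have := le_max_left (2 * D / a) (m K * (K : ℝ) ^ η)
    rw [div_le_iff₀ ha] at this
    linarith
  have hbound : ∀ k, K ≤ k → m k ≤ C * (k : ℝ) ^ (-η) := by
    intro k hk
    induction k, hk using Nat.le_induction with
    | base =>
      have hK0 : (0 : ℝ) < K := by exact_mod_cast (hK K le_rfl).2.2.2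
      calc m K = m K * (K : ℝ) ^ η * (K : ℝ) ^ (-η) := by
            rw [mul_assoc, ← Real.rpow_add hK0, add_neg_cancel, Real.rpow_zero, mul_one]
        _ ≤ C * (K : ℝ) ^ (-η) := by gcongr; exact le_max_right _ _
    | succ k hk ih =>
      obtain ⟨hrec, hv1, hdrift, hk1⟩ := hK k hk
      have hk0 : (0 : ℝ) < k := by exact_mod_cast hk1
      set u := (k : ℝ) ^ (-η)
      set v := ((k : ℝ) + 1) ^ (-η)
      have hv0 : 0 < v := by positivity
      have hvu : v ≤ u := Real.rpow_le_rpow_of_nonpos hk0 (by linarith) (by linarith)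
      have hηk : η / k ≤ a / 2 * u := by
        calc η / k = η * (k : ℝ) ^ (η - 1) * u := by
              rw [mul_assoc, ← Real.rpow_add hk0, show η - 1 + -η = -1 by ring, Real.rpow_neg_one,
                div_eq_mul_inv]
          _ ≤ a / 2 * u := by gcongr
      have hu : u ≤ v * (1 + a / 2 * u) :=
        (rpow_neg_le_add_one_rpow_neg_mul hη0.le hη1.le hk0).trans (by gcongr)
      push_cast
      calc m (k + 1) ≤ (1 - a * v) * m k + D * v ^ 2 := hrec
        _ ≤ (1 - a * v) * (C * u) + D * v ^ 2 := by
          gcongr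
          rw [le_div_iff₀ ha] at hv1
          linarith
        _ ≤ C * v := by
          nlinarith [mul_le_mul_of_nonneg_left hu hC0, mul_le_mul_of_nonneg_right hDC (sq_nonneg v),
            mul_le_mul_of_nonneg_left hvu (mul_nonneg hC0 hv0.le)]
  refine IsBigO.of_bound C (eventually_atTop.2 ⟨K, fun k hk => ?_⟩)
  rw [Real.norm_of_nonneg (hm k), Real.norm_of_nonneg (by positivity)]
  exact hbound k hk

theorem integral_abs_le_sqrt_integral_sq {Ω : Type*} [MeasurableSpace Ω] {P : Measure Ω}
    [IsProbabilityMeasure P] {X : Ω → ℝ} (hX : MemLp X 2 P) :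
    ∫ ω, |X ω| ∂P ≤ √(∫ ω, X ω ^ 2 ∂P) := by
  have h := variance_nonneg |X| P
  rw [variance_eq_sub hX.abs] at h
  apply Real.le_sqrt_of_sq_le
  simpa [sq_abs] using h

theorem integral_eq_measureReal_of_zero_or_one {Ω : Type*} [MeasurableSpace Ω] {P : Measure Ω}
    {X : Ω → ℝ} (hX : Measurable X) (h01 : ∀ ω, X ω = 0 ∨ X ω = 1) :
    ∫ ω, X ω ∂P = P.real {ω | X ω = 1} := by
  calc ∫ ω, X ω ∂P = ∫ ω, {ω | X ω = 1}.indicator 1 ω ∂P := by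
        congr 1 with ω
        rcases h01 ω with h | h <;> simp [h]
    _ = P.real {ω | X ω = 1} := integral_indicator_one (hX (measurableSet_singleton 1))

theorem integral_sq_add_mul_le_of_indepFun {Ω : Type*} [MeasurableSpace Ω] {P : Measure Ω}
    {X Y ξ : Ω → ℝ} (hX : MemLp X 2 P) (hY : MemLp Y 2 P) (hξ : AEStronglyMeasurable ξ P)
    (hξ1 : ∀ᵐ ω ∂P, |ξ ω| ≤ 1) (hξ0 : ∫ ω, ξ ω ∂P = 0) (hind : IndepFun (X * Y) ξ P) :
    ∫ ω, (X ω + Y ω * ξ ω) ^ 2 ∂P ≤ ∫ ω, X ω ^ 2 ∂P + ∫ ω, Y ω ^ 2 ∂P := by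
  have hX2 := hX.integrable_sq
  have hY2 := hY.integrable_sq
  have hXY : Integrable (X * Y) P := hX.integrable_mul hY
  have hξ2 : ∀ᵐ ω ∂P, ‖ξ ω ^ 2‖ ≤ 1 := hξ1.mono fun ω h => by
    rw [Real.norm_eq_abs, abs_pow, sq_le_one_iff_abs_le_one, abs_abs]; exact h
  have hcross : ∫ ω, (X * Y) ω * ξ ω ∂P = 0 := by
    rw [← Pi.mul_def, hind.integral_mul_eq_mul_integral hXY.aestronglyMeasurable hξ, hξ0,
      mul_zero]
  have hcrossI : Integrable (fun ω => (X * Y) ω * ξ ω) P :=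
    hXY.mul_bdd hξ (hξ1.mono fun ω h => by rwa [Real.norm_eq_abs])
  have hnoiseI : Integrable (fun ω => Y ω ^ 2 * ξ ω ^ 2) P := hY2.mul_bdd (hξ.pow 2) hξ2
  have hnoise : ∫ ω, Y ω ^ 2 * ξ ω ^ 2 ∂P ≤ ∫ ω, Y ω ^ 2 ∂P := by
    refine integral_mono_ae hnoiseI hY2 (hξ2.mono fun ω h => ?_)
    rw [Real.norm_eq_abs, abs_of_nonneg (sq_nonneg _)] at h
    exact mul_le_of_le_one_right (sq_nonneg _) h
  calc ∫ ω, (X ω + Y ω * ξ ω) ^ 2 ∂P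
      = ∫ ω, (X ω ^ 2 + 2 * ((X * Y) ω * ξ ω) + Y ω ^ 2 * ξ ω ^ 2) ∂P := by
        congr 1 with ω; simp only [Pi.mul_apply]; ring
    _ = ∫ ω, X ω ^ 2 ∂P + ∫ ω, Y ω ^ 2 * ξ ω ^ 2 ∂P := by
        have hI : Integrable (fun ω => X ω ^ 2 + 2 * ((X * Y) ω * ξ ω)) P :=
          hX2.add (hcrossI.const_mul 2)
        rw [integral_add hI hnoiseI, integral_add hX2 (hcrossI.const_mul 2), integral_const_mul,
          hcross, mul_zero, add_zero]
    _ ≤ ∫ ω, X ω ^ 2 ∂P + ∫ ω, Y ω ^ 2 ∂P := by gcongr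

section Recursion

variable {Ω β γ : Type*} [MeasurableSpace β] [MeasurableSpace γ] {F : ℕ → β → γ → β}
  {I : ℕ → Ω → γ} {x : ℕ → Ω → β} {x₀ : β}

theorem exists_measurable_eq_comp_of_recursion
    (hF : ∀ k, Measurable fun q : β × γ => F k q.1 q.2) (hx0 : ∀ ω, x 0 ω = x₀)
    (hx : ∀ k ω, x (k + 1) ω = F k (x k ω) (I k ω)) (k : ℕ) :
    ∃ g : (Finset.range k → γ) → β, Measurable g ∧ ∀ ω, x k ω = g fun i => I i ω := by
  induction k with
  | zero => exact ⟨fun _ => x₀, measurable_const, hx0⟩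
  | succ k ih =>
    obtain ⟨g, hg, hxg⟩ := ih
    have hsub : Finset.range k ⊆ Finset.range (k + 1) := Finset.range_subset_range.2 k.le_succ
    refine ⟨fun v => F k (g (Finset.restrict₂ (π := fun _ => γ) hsub v))
        (v ⟨k, Finset.self_mem_range_succ k⟩),
      (hF k).comp ((hg.comp (Finset.measurable_restrict₂ (X := fun _ => γ) hsub)).prodMk
        (measurable_pi_apply _)),
      fun ω => ?_⟩
    rw [hx, hxg]
    rfl

theorem measurable_of_recursion [MeasurableSpace Ω]
    (hF : ∀ k, Measurable fun q : β × γ => F k q.1 q.2) (hI : ∀ k, Measurable (I k))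
    (hx0 : ∀ ω, x 0 ω = x₀) (hx : ∀ k ω, x (k + 1) ω = F k (x k ω) (I k ω)) (k : ℕ) :
    Measurable (x k) := by
  obtain ⟨g, hg, hxg⟩ := exists_measurable_eq_comp_of_recursion hF hx0 hx k
  rw [funext hxg]
  exact hg.comp (measurable_pi_lambda _ fun i => hI i)

theorem indepFun_of_recursion [MeasurableSpace Ω] {P : Measure Ω}
    (hF : ∀ k, Measurable fun q : β × γ => F k q.1 q.2) (hI : ∀ k, Measurable (I k))
    (hindep : iIndepFun I P) (hx0 : ∀ ω, x 0 ω = x₀)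
    (hx : ∀ k ω, x (k + 1) ω = F k (x k ω) (I k ω)) (k : ℕ) :
    IndepFun (x k) (I k) P := by
  obtain ⟨g, hg, hxg⟩ := exists_measurable_eq_comp_of_recursion hF hx0 hx k
  rw [funext hxg]
  exact (hindep.indepFun_finset (Finset.range k) {k} (by simp) hI).comp hg
    (measurable_pi_apply ⟨k, Finset.mem_singleton_self k⟩)

end Recursion

theorem abs_le_of_sa_recursion {Ω : Type*} {p y₀ : ℝ} (hp : 0 ≤ p) {ε : ℕ → ℝ}
    (hε : ∀ k, 0 ≤ ε k ∧ ε k ≤ 1) {I y : ℕ → Ω → ℝ} (h01 : ∀ k ω, I k ω = 0 ∨ I k ω = 1)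
    (hy0 : ∀ ω, y 0 ω = y₀) (hy : ∀ k ω, y (k + 1) ω = y k ω + ε k * (I k ω * (y k ω + p) - y k ω))
    (k : ℕ) (ω : Ω) : |y k ω| ≤ |y₀| + k * p := by
  induction k with
  | zero => simp [hy0]
  | succ k ih =>
    obtain ⟨hε0, hε1⟩ := hε k
    obtain ⟨hlo, hhi⟩ := abs_le.1 ih
    rw [hy, abs_le]
    push_cast
    rcases h01 k ω with h | h <;> rw [h] <;> constructor <;> nlinarith [abs_nonneg (y k ω)]

theorem integral_sq_sub_le_of_sa_step {Ω : Type*} [MeasurableSpace Ω] {P : Measure Ω}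
    [IsProbabilityMeasure P] {Δ p ε : ℝ} (hΔ : 0 ≤ Δ) (hp : 0 < p) {J Y Y' : Ω → ℝ}
    (hY : MemLp Y 2 P) (hJ : Measurable J) (h01 : ∀ ω, J ω = 0 ∨ J ω = 1)
    (hmean : ∫ ω, J ω ∂P = Δ / (Δ + p)) (hind : IndepFun Y J P)
    (hY' : ∀ ω, Y' ω = Y ω + ε * (J ω * (Y ω + p) - Y ω)) :
    ∫ ω, (Y' ω - Δ) ^ 2 ∂P ≤ ((1 - p / (Δ + p) * ε) ^ 2 + 2 * ε ^ 2) * ∫ ω, (Y ω - Δ) ^ 2 ∂P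
      + 2 * (Δ + p) ^ 2 * ε ^ 2 := by
  set μ := Δ / (Δ + p)
  set a := p / (Δ + p)
  have hΔp : 0 < Δ + p := by linarith
  have hdecomp : ∀ ω, Y' ω - Δ = (1 - a * ε) * (Y ω - Δ) + ε * (Y ω + p) * (J ω - μ) := by
    intro ω
    rw [hY']
    simp only [a, μ]
    field_simp
    ring
  have hμ : 0 ≤ μ ∧ μ ≤ 1 := ⟨by positivity, (div_le_one hΔp).2 (by linarith)⟩
  have hξ1 : ∀ ω, |J ω - μ| ≤ 1 := fun ω => by
    rcases h01 ω with h | h <;> rw [h, abs_le] <;> constructor <;> linarith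
  have hξ0 : ∫ ω, (J ω - μ) ∂P = 0 := by
    have hJint : Integrable J P :=
      (memLp_top_of_bound hJ.aestronglyMeasurable 1 (ae_of_all _ fun ω => by
        rcases h01 ω with h | h <;> simp [h])).integrable le_top
    rw [integral_sub hJint (integrable_const μ), hmean, integral_const]
    simp [μ]
  have hind' : IndepFun ((fun ω => (1 - a * ε) * (Y ω - Δ)) * fun ω => ε * (Y ω + p))
      (fun ω => J ω - μ) P :=
    hind.comp (φ := fun y => (1 - a * ε) * (y - Δ) * (ε * (y + p))) (ψ := fun j => j - μ)
      (by fun_prop) (by fun_prop)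
  have hnoise : ∫ ω, (Y ω + p) ^ 2 ∂P ≤ 2 * ∫ ω, (Y ω - Δ) ^ 2 ∂P + 2 * (Δ + p) ^ 2 := by
    have hZ2 : Integrable (fun ω => (Y ω - Δ) ^ 2) P := (hY.sub (memLp_const Δ)).integrable_sq
    calc ∫ ω, (Y ω + p) ^ 2 ∂P ≤ ∫ ω, (2 * (Y ω - Δ) ^ 2 + 2 * (Δ + p) ^ 2) ∂P :=
          integral_mono (hY.add (memLp_const p)).integrable_sq
            ((hZ2.const_mul 2).add (integrable_const _)) fun ω => by
              nlinarith [sq_nonneg (Y ω - Δ - (Δ + p))]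
      _ = 2 * ∫ ω, (Y ω - Δ) ^ 2 ∂P + 2 * (Δ + p) ^ 2 := by
          rw [integral_add (hZ2.const_mul 2) (integrable_const _), integral_const_mul,
            integral_const]
          simp
  calc ∫ ω, (Y' ω - Δ) ^ 2 ∂P
      = ∫ ω, ((1 - a * ε) * (Y ω - Δ) + ε * (Y ω + p) * (J ω - μ)) ^ 2 ∂P := by
        simp_rw [hdecomp]
    _ ≤ ∫ ω, ((1 - a * ε) * (Y ω - Δ)) ^ 2 ∂P + ∫ ω, (ε * (Y ω + p)) ^ 2 ∂P :=
        integral_sq_add_mul_le_of_indepFun ((hY.sub (memLp_const Δ)).const_mul _)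
          ((hY.add (memLp_const p)).const_mul _) (hJ.sub_const μ).aestronglyMeasurable
          (ae_of_all _ hξ1) hξ0 hind'
    _ = (1 - a * ε) ^ 2 * ∫ ω, (Y ω - Δ) ^ 2 ∂P + ε ^ 2 * ∫ ω, (Y ω + p) ^ 2 ∂P := by
        simp_rw [mul_pow]
        rw [integral_const_mul, integral_const_mul]
    _ ≤ (1 - a * ε) ^ 2 * ∫ ω, (Y ω - Δ) ^ 2 ∂P
          + ε ^ 2 * (2 * ∫ ω, (Y ω - Δ) ^ 2 ∂P + 2 * (Δ + p) ^ 2) := by gcongr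
    _ = _ := by ring

theorem one_sub_mul_sq_add_two_mul_sq_le {a ε : ℝ} (ha : a ≤ 1) (hε : 0 ≤ ε) (hεa : 3 * ε ≤ a) :
    (1 - a * ε) ^ 2 + 2 * ε ^ 2 ≤ 1 - a * ε := by
  nlinarith [mul_nonneg hε (sub_nonneg.2 hεa), mul_nonneg (mul_nonneg hε hε) (sub_nonneg.2 ha)]

theorem exists_sqrt_le_mul_rpow_of_isBigO {m : ℕ → ℝ} {η : ℝ}
    (h : m =O[atTop] fun k => (k : ℝ) ^ (-η)) :
    ∃ C > 0, ∀ k : ℕ, 1 ≤ k → √(m k) ≤ C * (k : ℝ) ^ (-η / 2) := by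
  obtain ⟨C, hC0, hC⟩ := bound_of_isBigO_nat_atTop h
  refine ⟨√C, by positivity, fun k hk => ?_⟩
  have hk0 : (0 : ℝ) < k := by exact_mod_cast hk
  have hpos : 0 < (k : ℝ) ^ (-η) := Real.rpow_pos_of_pos hk0 _
  calc √(m k) ≤ √(C * (k : ℝ) ^ (-η)) := by
        refine Real.sqrt_le_sqrt ((le_abs_self _).trans ?_)
        simpa [abs_of_pos hpos] using hC hpos.ne'
    _ = √C * (k : ℝ) ^ (-η / 2) := by
        rw [Real.sqrt_mul hC0.le, Real.sqrt_eq_rpow ((k : ℝ) ^ (-η)), ← Real.rpow_mul hk0.le]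
        ring_nf

-- `I k` plays the role of the paper's `I_{k+1}`.
/-- **SA estimator: convergence rate in expected error.**
`I k` stands for the indicator `I_{k+1}` of the paper, the stepsizes are
`η_k = (k+1)^{−η}` with `η ∈ (0,1)`, and the conclusion is
`E|y_k − Δ| ≤ C·k^{−η/2}` for all `k ≥ 1`. -/
theorem sa_estimator_rate
    {Ω : Type*} [MeasurableSpace Ω] (P : Measure Ω) [IsProbabilityMeasure P]
    (Δ p : ℝ) (hΔ : 0 < Δ) (hp : 0 < p)
    (I : ℕ → Ω → ℝ)
    (hmeas : ∀ k, Measurable (I k))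
    (h01 : ∀ k ω, I k ω = 0 ∨ I k ω = 1)
    (hindep : iIndepFun I P)
    (hP : ∀ k, P {ω | I k ω = 1} = ENNReal.ofReal (Δ / (Δ + p)))
    (η : ℝ) (hη0 : 0 < η) (hη1 : η < 1)
    (y₀ : ℝ) (y : ℕ → Ω → ℝ)
    (hy0 : ∀ ω, y 0 ω = y₀)
    (hy : ∀ k ω, y (k + 1) ω
        = y k ω + ((k : ℝ) + 1) ^ (-η) * (I k ω * (y k ω + p) - y k ω)) :
    ∃ C > 0, ∀ k : ℕ, 1 ≤ k → ∫ ω, |y k ω - Δ| ∂P ≤ C * (k : ℝ) ^ (-η / 2) := by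
  set ε : ℕ → ℝ := fun k => ((k : ℝ) + 1) ^ (-η)
  set a := p / (Δ + p)
  set m : ℕ → ℝ := fun k => ∫ ω, (y k ω - Δ) ^ 2 ∂P
  have hε : ∀ k, 0 ≤ ε k ∧ ε k ≤ 1 := fun k =>
    ⟨by positivity, Real.rpow_le_one_of_one_le_of_nonpos (by simp) (by linarith)⟩
  set F : ℕ → ℝ → ℝ → ℝ := fun k y i => y + ε k * (i * (y + p) - y)
  have hF : ∀ k, Measurable fun q : ℝ × ℝ => F k q.1 q.2 := fun k => by fun_prop
  have hyL2 : ∀ k, MemLp (y k) 2 P := fun k =>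
    MemLp.of_bound (measurable_of_recursion hF hmeas hy0 hy k).aestronglyMeasurable _
      (ae_of_all _ (abs_le_of_sa_recursion hp.le hε h01 hy0 hy k))
  have hmean : ∀ k, ∫ ω, I k ω ∂P = Δ / (Δ + p) := fun k => by
    rw [integral_eq_measureReal_of_zero_or_one (hmeas k) (h01 k), measureReal_def, hP k,
      ENNReal.toReal_ofReal (by positivity)]
  have hstep : ∀ k, m (k + 1) ≤ ((1 - a * ε k) ^ 2 + 2 * ε k ^ 2) * m k
      + 2 * (Δ + p) ^ 2 * ε k ^ 2 := fun k =>
    integral_sq_sub_le_of_sa_step hΔ.le hp (hyL2 k) (hmeas k) (h01 k) (hmean k)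
      (indepFun_of_recursion hF hmeas hindep hy0 hy k) (hy k)
  have ha : 0 < a ∧ a ≤ 1 := ⟨by positivity, (div_le_one (by positivity)).2 (by linarith)⟩
  have hrate : m =O[atTop] fun k => (k : ℝ) ^ (-η) := by
    refine isBigO_rpow_neg_of_eventually_le (D := 2 * (Δ + p) ^ 2) ha.1 hη0 hη1
      (fun k => integral_nonneg fun ω => sq_nonneg _) ?_
    filter_upwards [(tendsto_natCast_add_one_rpow_neg_atTop hη0).eventually
      (eventually_le_nhds (by positivity : 0 < a / 3))] with k hk
    refine (hstep k).trans ?_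
    gcongr ?_ * m k + _
    exact one_sub_mul_sq_add_two_mul_sq_le ha.2 (hε k).1 (by change ε k ≤ a / 3 at hk; linarith)
  obtain ⟨C, hC0, hC⟩ := exists_sqrt_le_mul_rpow_of_isBigO hrate
  exact ⟨C, hC0, fun k hk =>
    (integral_abs_le_sqrt_integral_sq ((hyL2 k).sub (memLp_const Δ))).trans (hC k hk)⟩
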